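/- Fix matrices A_i, Ā_{ij} (n×n real), B̄_{ij} (n×n_u real), F̄_{ij} ∈ ℝⁿ, L_i (n×m real), C (m×n real), real symmetric positive definite n×n matrices P and Q, constants θ_j ∈ ℝ, ρ_j > 0, θ̄ ≥ 0, ā ≥ 0, and functions μ_i : ℝ → ℝ, x̂ : ℝ → ℝⁿ, u : ℝ → ℝ^{n_u}. Define φ_{ij}(t) := Ā_{ij} x̂(t) + B̄_{ij} u(t) + F̄_{ij}. Assume: (a) for every i, −Q − (P(Aᵢ − LᵢC) + (Aᵢ − LᵢC)ᵀP) is positive semidefinite; (b) |θ_j| ≤ θ̄ and ‖Ā_{ij}‖ ≤ ā (ℓ²-operator norm) for all i, j, and n_θ · ā · θ̄ ≤ λmin(Q)/(2 λmax(P)); (c) μᵢ(t) ≥ 0 for all i and t; (d) eₓ : ℝ → ℝⁿ and e_{θ_j} : ℝ → ℝ are differentiable with, for every t, eₓ′(t) = Σᵢ μᵢ(t)[(Aᵢ − LᵢC + Σⱼ θⱼ Ā_{ij}) eₓ(t) + Σⱼ e_{θ_j}(t) φ_{ij}(t)] and e_{θ_j}′(t) = −(1/ρ_j) Σᵢ μᵢ(t)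 φ_{ij}(t)ᵀ P eₓ(t). Then the function V(t) := eₓ(t)ᵀ P eₓ(t) + Σⱼ ρ_j e_{θ_j}(t)² is nonincreasing on ℝ. -/

import Mathlib

/-!
Along the error dynamics, the update law for `e_θ` is chosen exactly so that the terms
`e_{θⱼ} φᵢⱼᵀ P eₓ` cancel in `V̇`, leaving `V̇ = 2 Σᵢ μᵢ (Mᵢ eₓ)ᵀ P eₓ` with
`Mᵢ = Aᵢ - LᵢC + Σⱼ θⱼ Āᵢⱼ`. The LMI bounds the nominal part of each summand by
`-½ eₓᵀ Q eₓ ≤ -½ λmin(Q) ‖eₓ‖²`, while Cauchy–Schwarz for the form of `P` and `P ≤ λmax(P) • 1`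
bound each perturbation term by `θ̄ ā λmax(P) ‖eₓ‖²`; the design condition on `n_θ ā θ̄` makes
the sum nonpositive.
-/

open Matrix
open scoped ComplexOrder

namespace Matrix

variable {n : Type*} [Fintype n] [DecidableEq n]

theorem IsHermitian.posSemidef_sub_smul_one_iff {𝕜 : Type*} [RCLike 𝕜] {A : Matrix n n 𝕜}
    (hA : A.IsHermitian) {c : ℝ} :
    (A - (c : 𝕜) • 1).PosSemidef ↔ ∀ i, c ≤ hA.eigenvalues i := by
  conv_lhs => rw [hA.spectral_theorem, ← Algebra.algebraMap_eq_smul_one,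
    ← AlgHomClass.commutes (Unitary.conjStarAlgAut 𝕜 _ hA.eigenvectorUnitary), ← map_sub,
    Algebra.algebraMap_eq_smul_one, smul_one_eq_diagonal, diagonal_sub]
  simp [Unitary.conjStarAlgAut_apply, Unitary.isUnit_coe.posSemidef_star_right_conjugate_iff]

theorem IsHermitian.posSemidef_smul_one_sub_iff {𝕜 : Type*} [RCLike 𝕜] {A : Matrix n n 𝕜}
    (hA : A.IsHermitian) {c : ℝ} :
    ((c : 𝕜) • 1 - A).PosSemidef ↔ ∀ i, hA.eigenvalues i ≤ c := by
  conv_lhs => rw [hA.spectral_theorem, ← Algebra.algebraMap_eq_smul_one,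
    ← AlgHomClass.commutes (Unitary.conjStarAlgAut 𝕜 _ hA.eigenvectorUnitary), ← map_sub,
    Algebra.algebraMap_eq_smul_one, smul_one_eq_diagonal, diagonal_sub]
  simp [Unitary.conjStarAlgAut_apply, Unitary.isUnit_coe.posSemidef_star_right_conjugate_iff]

variable {A : Matrix n n ℝ}

theorem IsHermitian.iInf_eigenvalues_mul_dotProduct_self_le (hA : A.IsHermitian) (x : n → ℝ) :
    (⨅ i, hA.eigenvalues i) * (x ⬝ᵥ x) ≤ x ⬝ᵥ A *ᵥ x := by
  have h := (hA.posSemidef_sub_smul_one_iff.2 fun i =>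
    ciInf_le (Finite.bddBelow_range _) i).dotProduct_mulVec_nonneg x
  simp only [RCLike.ofReal_real_eq_id, id, sub_mulVec, smul_mulVec, one_mulVec, dotProduct_sub,
    dotProduct_smul, smul_eq_mul, star_trivial] at h
  linarith

theorem IsHermitian.dotProduct_mulVec_le_iSup_eigenvalues_mul (hA : A.IsHermitian)
    (x : n → ℝ) : x ⬝ᵥ A *ᵥ x ≤ (⨆ i, hA.eigenvalues i) * (x ⬝ᵥ x) := by
  have h := (hA.posSemidef_smul_one_sub_iff.2 fun i =>
    le_ciSup (Finite.bddAbove_range _) i).dotProduct_mulVec_nonneg x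
  simp only [RCLike.ofReal_real_eq_id, id, sub_mulVec, smul_mulVec, one_mulVec, dotProduct_sub,
    dotProduct_smul, smul_eq_mul, star_trivial] at h
  linarith

omit [DecidableEq n] in
theorem IsHermitian.dotProduct_mulVec_comm (hA : A.IsHermitian) (x y : n → ℝ) :
    x ⬝ᵥ A *ᵥ y = y ⬝ᵥ A *ᵥ x := by
  rw [dotProduct_mulVec, ← mulVec_transpose, ← conjTranspose_eq_transpose_of_trivial, hA.eq,
    dotProduct_comm]

omit [DecidableEq n] in
theorem PosSemidef.dotProduct_mulVec_sq_le (hA : A.PosSemidef) (x y : n → ℝ) :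
    (x ⬝ᵥ A *ᵥ y) ^ 2 ≤ (x ⬝ᵥ A *ᵥ x) * (y ⬝ᵥ A *ᵥ y) := by
  have hquad : ∀ t : ℝ,
      0 ≤ (y ⬝ᵥ A *ᵥ y) * (t * t) + 2 * (x ⬝ᵥ A *ᵥ y) * t + x ⬝ᵥ A *ᵥ x := fun t => by
    have h := hA.dotProduct_mulVec_nonneg (x + t • y)
    simp only [star_trivial, mulVec_add, mulVec_smul, dotProduct_add, add_dotProduct,
      dotProduct_smul, smul_dotProduct, smul_eq_mul, hA.isHermitian.dotProduct_mulVec_comm y x] at h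
    linarith
  have := discrim_le_zero hquad
  rw [discrim] at this
  linarith

theorem mulVec_dotProduct_mulVec_self_le (A : Matrix n n ℝ) (x : n → ℝ) :
    (A *ᵥ x) ⬝ᵥ (A *ᵥ x) ≤ ‖toEuclideanCLM (𝕜 := ℝ) A‖ ^ 2 * (x ⬝ᵥ x) := by
  have hnorm (y : n → ℝ) : y ⬝ᵥ y = ‖WithLp.toLp 2 y‖ ^ 2 := by
    rw [← real_inner_self_eq_norm_sq, EuclideanSpace.inner_toLp_toLp, star_trivial]
  rw [hnorm, hnorm, ← mul_pow, ← toEuclideanCLM_toLp]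
  exact pow_le_pow_left₀ (norm_nonneg _) ((toEuclideanCLM (𝕜 := ℝ) A).le_opNorm _) 2

theorem PosSemidef.abs_mulVec_dotProduct_mulVec_le {P : Matrix n n ℝ} (hP : P.PosSemidef)
    (B : Matrix n n ℝ) (x : n → ℝ) :
    |(B *ᵥ x) ⬝ᵥ P *ᵥ x| ≤
      (⨆ i, hP.isHermitian.eigenvalues i) * ‖toEuclideanCLM (𝕜 := ℝ) B‖ * (x ⬝ᵥ x) := by
  set lmax := ⨆ i, hP.isHermitian.eigenvalues i
  have hlmax : 0 ≤ lmax := Real.iSup_nonneg hP.eigenvalues_nonneg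
  have hx : 0 ≤ x ⬝ᵥ x := dotProduct_star_self_nonneg x
  apply abs_le_of_sq_le_sq _ (by positivity)
  calc ((B *ᵥ x) ⬝ᵥ P *ᵥ x) ^ 2 ≤ ((B *ᵥ x) ⬝ᵥ P *ᵥ (B *ᵥ x)) * (x ⬝ᵥ P *ᵥ x) :=
        hP.dotProduct_mulVec_sq_le _ _
    _ ≤ (lmax * ((B *ᵥ x) ⬝ᵥ (B *ᵥ x))) * (lmax * (x ⬝ᵥ x)) := by
        gcongr
        · exact hP.dotProduct_mulVec_nonneg x
        · exact mul_nonneg hlmax (dotProduct_star_self_nonneg _)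
        · exact hP.isHermitian.dotProduct_mulVec_le_iSup_eigenvalues_mul _
        · exact hP.isHermitian.dotProduct_mulVec_le_iSup_eigenvalues_mul _
    _ ≤ (lmax * (‖toEuclideanCLM (𝕜 := ℝ) B‖ ^ 2 * (x ⬝ᵥ x))) * (lmax * (x ⬝ᵥ x)) := by
        gcongr
        exact mulVec_dotProduct_mulVec_self_le B x
    _ = (lmax * ‖toEuclideanCLM (𝕜 := ℝ) B‖ * (x ⬝ᵥ x)) ^ 2 := by ring

omit [DecidableEq n] in
theorem two_mul_mulVec_dotProduct_mulVec_le {P Q N : Matrix n n ℝ} (hP : P.IsHermitian)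
    (hN : (-Q - (P * N + Nᵀ * P)).PosSemidef) (x : n → ℝ) :
    2 * ((N *ᵥ x) ⬝ᵥ P *ᵥ x) ≤ -(x ⬝ᵥ Q *ᵥ x) := by
  have h := hN.dotProduct_mulVec_nonneg x
  simp only [star_trivial, sub_mulVec, neg_mulVec, add_mulVec, ← mulVec_mulVec, dotProduct_sub,
    dotProduct_neg, dotProduct_add, dotProduct_mulVec x Nᵀ, vecMul_transpose,
    hP.dotProduct_mulVec_comm x] at h
  linarith

theorem add_sum_smul_mulVec_dotProduct_mulVec_nonpos {ι : Type*} [Fintype ι]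
    {P Q N : Matrix n n ℝ} {Abar : ι → Matrix n n ℝ} {θ : ι → ℝ} {θbar abar : ℝ}
    (hP : P.PosDef) (hQ : Q.IsHermitian) (hN : (-Q - (P * N + Nᵀ * P)).PosSemidef)
    (hθ : ∀ j, |θ j| ≤ θbar) (hAbar : ∀ j, ‖toEuclideanCLM (𝕜 := ℝ) (Abar j)‖ ≤ abar)
    (hbound : (Fintype.card ι : ℝ) * abar * θbar ≤
      (⨅ i, hQ.eigenvalues i) / (2 * ⨆ i, hP.isHermitian.eigenvalues i))
    (x : n → ℝ) :
    ((N + ∑ j, θ j • Abar j) *ᵥ x) ⬝ᵥ P *ᵥ x ≤ 0 := by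
  rcases isEmpty_or_nonempty n with hn | hn
  · simp [dotProduct]
  set lmax := ⨆ i, hP.isHermitian.eigenvalues i
  have hlmax : 0 < lmax :=
    (hP.eigenvalues_pos (Classical.arbitrary n)).trans_le (le_ciSup (Finite.bddAbove_range _) _)
  have hx : 0 ≤ x ⬝ᵥ x := dotProduct_star_self_nonneg x
  have hperturb (j : ι) :
      θ j * ((Abar j *ᵥ x) ⬝ᵥ P *ᵥ x) ≤ θbar * (lmax * abar * (x ⬝ᵥ x)) := by
    calc θ j * ((Abar j *ᵥ x) ⬝ᵥ P *ᵥ x)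
        ≤ |θ j| * |(Abar j *ᵥ x) ⬝ᵥ P *ᵥ x| := (le_abs_self _).trans (abs_mul _ _).le
      _ ≤ θbar * (lmax * abar * (x ⬝ᵥ x)) := by
        gcongr
        · exact (abs_nonneg _).trans (hθ j)
        · exact hθ j
        · exact (hP.posSemidef.abs_mulVec_dotProduct_mulVec_le _ x).trans
            (by gcongr; exact hAbar j)
  have hsplit : ((N + ∑ j, θ j • Abar j) *ᵥ x) ⬝ᵥ P *ᵥ x =
      (N *ᵥ x) ⬝ᵥ P *ᵥ x + ∑ j, θ j * ((Abar j *ᵥ x) ⬝ᵥ P *ᵥ x) := by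
    simp only [add_mulVec, sum_mulVec, smul_mulVec, add_dotProduct, sum_dotProduct,
      smul_dotProduct, smul_eq_mul]
  rw [hsplit]
  have hsum := Finset.sum_le_sum fun j (_ : j ∈ Finset.univ) => hperturb j
  rw [Finset.sum_const, Finset.card_univ, nsmul_eq_mul] at hsum
  have hnominal := two_mul_mulVec_dotProduct_mulVec_le hP.isHermitian hN x
  have hQx := hQ.iInf_eigenvalues_mul_dotProduct_self_le x
  have hbound' := mul_le_mul_of_nonneg_right ((le_div_iff₀ (by positivity)).1 hbound) hx
  linarith

end Matrix

section Calculus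

variable {𝕜 : Type*} [NontriviallyNormedField 𝕜] {m n : Type*} [Fintype n]
  {f g : 𝕜 → n → 𝕜} {f' g' : n → 𝕜} {t : 𝕜}

theorem HasDerivAt.dotProduct (hf : HasDerivAt f f' t) (hg : HasDerivAt g g' t) :
    HasDerivAt (fun s => f s ⬝ᵥ g s) (f' ⬝ᵥ g t + f t ⬝ᵥ g') t := by
  simp only [_root_.dotProduct, ← Finset.sum_add_distrib]
  exact HasDerivAt.fun_sum fun i _ => (hasDerivAt_pi.1 hf i).mul (hasDerivAt_pi.1 hg i)

theorem HasDerivAt.mulVec (A : Matrix m n 𝕜) (hf : HasDerivAt f f' t) :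
    HasDerivAt (fun s => A *ᵥ f s) (A *ᵥ f') t :=
  hasDerivAt_pi.2 fun i => by
    have h := (hasDerivAt_const t (A i)).dotProduct hf
    rwa [zero_dotProduct, zero_add] at h

end Calculus

theorem update_law_cancels_cross_terms {n ι κ : Type*} [Fintype n] [Fintype ι]
    [Fintype κ] (μ : ι → ℝ) (w : ι → n → ℝ) (e ρ : κ → ℝ) (hρ : ∀ j, ρ j ≠ 0)
    (φ : ι → κ → n → ℝ) (p : n → ℝ) :
    (∑ i, μ i • (w i + ∑ j, e j • φ i j)) ⬝ᵥ p
      + ∑ j, ρ j * (e j * (-(1 / ρ j) * ∑ i, μ i * (φ i j ⬝ᵥ p)))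
      = ∑ i, μ i * (w i ⬝ᵥ p) := by
  have hcancel (j : κ) : ρ j * (e j * (-(1 / ρ j) * ∑ i, μ i * (φ i j ⬝ᵥ p)))
      = -∑ i, μ i * (e j * (φ i j ⬝ᵥ p)) := by
    rw [Finset.mul_sum, Finset.mul_sum, Finset.mul_sum, ← Finset.sum_neg_distrib]
    refine Finset.sum_congr rfl fun i _ => ?_
    field_simp [hρ j]
  simp only [hcancel]
  simp only [sum_dotProduct, smul_dotProduct, add_dotProduct, smul_eq_mul, mul_add,
    Finset.sum_add_distrib, Finset.sum_neg_distrib, Finset.mul_sum]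
  rw [Finset.sum_comm (γ := κ), add_neg_cancel_right]

theorem lyapunov_nonincreasing_general {n m r nθ : ℕ}
    (A : Fin r → Matrix (Fin n) (Fin n) ℝ)
    (Abar : Fin r → Fin nθ → Matrix (Fin n) (Fin n) ℝ)
    (L : Fin r → Matrix (Fin n) (Fin m) ℝ)
    (C : Matrix (Fin m) (Fin n) ℝ)
    (P Q : Matrix (Fin n) (Fin n) ℝ)
    (hP : P.IsHermitian) (hQ : Q.IsHermitian)
    (hPpd : P.PosDef)
    (θ : Fin nθ → ℝ) (ρ : Fin nθ → ℝ) (hρ : ∀ j, 0 < ρ j)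
    (θbar abar : ℝ)
    (μ : Fin r → ℝ → ℝ)
    (φ : Fin r → Fin nθ → ℝ → Fin n → ℝ)
    -- (a) the LMI stability condition for each submodel
    (ha : ∀ i, (-Q - (P * (A i - L i * C) + (A i - L i * C)ᵀ * P)).PosSemidef)
    -- (b) parameter and perturbation bounds
    (hθ : ∀ j, |θ j| ≤ θbar)
    (hAbar : ∀ i j, ‖Matrix.toEuclideanCLM (𝕜 := ℝ) (Abar i j)‖ ≤ abar)
    (hbound : (nθ : ℝ) * abar * θbar ≤
        (⨅ i, hQ.eigenvalues i) / (2 * ⨆ i, hP.eigenvalues i))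
    -- (c) nonnegative weighting functions
    (hμ : ∀ i t, 0 ≤ μ i t)
    -- (d) the joint error dynamics
    (ex : ℝ → Fin n → ℝ) (eθ : Fin nθ → ℝ → ℝ)
    (hex : ∀ t, HasDerivAt ex
      (∑ i, μ i t • ((A i - L i * C + ∑ j, θ j • Abar i j).mulVec (ex t)
        + ∑ j, eθ j t • φ i j t)) t)
    (heθ : ∀ j t, HasDerivAt (eθ j)
      (-(1 / ρ j) * ∑ i, μ i t * (φ i j t ⬝ᵥ P.mulVec (ex t))) t) :
    Antitone (fun t => ex t ⬝ᵥ P.mulVec (ex t) + ∑ j, ρ j * (eθ j t) ^ 2) := by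
  have hV (t : ℝ) : HasDerivAt (fun t => ex t ⬝ᵥ P.mulVec (ex t) + ∑ j, ρ j * (eθ j t) ^ 2)
      (2 * ∑ i, μ i t * (((A i - L i * C + ∑ j, θ j • Abar i j) *ᵥ ex t) ⬝ᵥ P *ᵥ ex t)) t := by
    refine (((hex t).dotProduct ((hex t).mulVec P)).add (HasDerivAt.fun_sum (u := Finset.univ)
      fun j _ => ((heθ j t).pow 2).const_mul (ρ j))).congr_deriv ?_
    have hcancel := update_law_cancels_cross_terms (fun i => μ i t)
      (fun i => (A i - L i * C + ∑ j, θ j • Abar i j) *ᵥ ex t) (fun j => eθ j t) ρ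
      (fun j => (hρ j).ne') (fun i j => φ i j t) (P *ᵥ ex t)
    rw [hP.dotProduct_mulVec_comm (ex t), ← hcancel, mul_add, two_mul, Finset.mul_sum]
    refine congrArg _ (Finset.sum_congr rfl fun j _ => ?_)
    simp only [Nat.cast_ofNat, Nat.add_one_sub_one, pow_one]
    ring
  refine antitone_of_hasDerivAt_nonpos hV fun t => ?_
  refine mul_nonpos_of_nonneg_of_nonpos zero_le_two (Finset.sum_nonpos fun i _ => ?_)
  exact mul_nonpos_of_nonneg_of_nonpos (hμ i t)
    (add_sum_smul_mulVec_dotProduct_mulVec_nonpos hPpd hQ (ha i) hθ (hAbar i)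
      (by rwa [Fintype.card_fin]) (ex t))

/-- **Lyapunov monotonicity for the adaptive observer.** Under the design
conditions (a) `P(Aᵢ − LᵢC) + (Aᵢ − LᵢC)ᵀP ≼ −Q`, (b) the parameter and
perturbation bounds with `n_θ ā θ̄ ≤ λmin(Q)/(2 λmax(P))`, (c) nonnegative
weighting functions, and (d) the joint error dynamics with the parameter update
law (14), the function `V(t) = eₓ(t)ᵀ P eₓ(t) + Σⱼ ρⱼ e_{θⱼ}(t)²` is
nonincreasing on `ℝ`. -/
theorem lyapunov_nonincreasing {n nu m r nθ : ℕ}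
    (A : Fin r → Matrix (Fin n) (Fin n) ℝ)
    (Abar : Fin r → Fin nθ → Matrix (Fin n) (Fin n) ℝ)
    (Bbar : Fin r → Fin nθ → Matrix (Fin n) (Fin nu) ℝ)
    (Fbar : Fin r → Fin nθ → Fin n → ℝ)
    (L : Fin r → Matrix (Fin n) (Fin m) ℝ)
    (C : Matrix (Fin m) (Fin n) ℝ)
    (P Q : Matrix (Fin n) (Fin n) ℝ)
    (hP : P.IsHermitian) (hQ : Q.IsHermitian)
    (hPpd : P.PosDef) (hQpd : Q.PosDef)
    (θ : Fin nθ → ℝ) (ρ : Fin nθ → ℝ) (hρ : ∀ j, 0 < ρ j)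
    (θbar abar : ℝ)
    (μ : Fin r → ℝ → ℝ) (xhat : ℝ → Fin n → ℝ) (u : ℝ → Fin nu → ℝ)
    (φ : Fin r → Fin nθ → ℝ → Fin n → ℝ)
    (hφ : ∀ i j t, φ i j t = (Abar i j).mulVec (xhat t)
        + (Bbar i j).mulVec (u t) + Fbar i j)
    -- (a) the LMI stability condition for each submodel
    (ha : ∀ i, (-Q - (P * (A i - L i * C) + (A i - L i * C)ᵀ * P)).PosSemidef)
    -- (b) parameter and perturbation bounds
    (hθ : ∀ j, |θ j| ≤ θbar)
    (hAbar : ∀ i j, ‖Matrix.toEuclideanCLM (𝕜 := ℝ) (Abar i j)‖ ≤ abar)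
    (hbound : (nθ : ℝ) * abar * θbar ≤
        (⨅ i, hQ.eigenvalues i) / (2 * ⨆ i, hP.eigenvalues i))
    -- (c) nonnegative weighting functions
    (hμ : ∀ i t, 0 ≤ μ i t)
    -- (d) the joint error dynamics
    (ex : ℝ → Fin n → ℝ) (eθ : Fin nθ → ℝ → ℝ)
    (hex : ∀ t, HasDerivAt ex
      (∑ i, μ i t • ((A i - L i * C + ∑ j, θ j • Abar i j).mulVec (ex t)
        + ∑ j, eθ j t • φ i j t)) t)
    (heθ : ∀ j t, HasDerivAt (eθ j)
      (-(1 / ρ j) * ∑ i, μ i t * (φ i j t ⬝ᵥ P.mulVec (ex t))) t) :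
    Antitone (fun t => ex t ⬝ᵥ P.mulVec (ex t) + ∑ j, ρ j * (eθ j t) ^ 2) :=
  lyapunov_nonincreasing_general A Abar L C P Q hP hQ hPpd θ ρ hρ θbar abar μ φ ha hθ hAbar hbound
    hμ ex eθ hex heθ
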